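/- arXiv:2408.16787 — 2 statements merged into one kernel-verified Lean document; each statement's English description precedes it below -/
import Mathlib

section
/- Let V be a k-vector space equipped with bilinear operations a ⊗ b ↦ a_{(n)}b for n ∈ ℤ_{≥0}, such that for all a,b ∈ V, a_{(n)}b = 0 for n sufficiently large, and let ∂: V → V be linear. Then the bracket {a,b} = Σ_{n≥0} a_{(n)}b ⊗ ∂_1^n/n! ∈ V ⊗ k[∂_1] satisfies the Jacobi identity {a,{b,c}} − {b,{a,c}} = {{a,b},c} (as elements of V ⊗ k[∂_1,∂_2]) if and only if for all m,n ≥ 0 and all a,b,c ∈ V: [a_{(m)}, b_{(n)}]c = Σ_{j≥0} C(m,j) (a_{(j)}b)_{(m+n−j)}c. -/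
/- STATEMENT 3: V with bilinear operations a_{(n)}b (n ≥ 0), truncation, and
∂ : V → V linear.  The bracket {a,b} = Σ_n a_{(n)}b ⊗ ∂₁ⁿ/n! ∈ V ⊗ k[∂₁]
satisfies the Jacobi identity {a,{b,c}} − {b,{a,c}} = {{a,b},c} in
V ⊗ k[∂₁,∂₂] (after the identification ∂₃ ↦ ∂ − ∂₁ − ∂₂, under which
{{a,b},c} = Σ_{p,q} (a_{(p)}b)_{(q)}c ⊗ ∂₁^p/p! (∂₁+∂₂)^q/q!) if and only if
for all m,n ≥ 0: [a_{(m)}, b_{(n)}]c = Σ_j C(m,j) (a_{(j)}b)_{(m+n-j)}c. -/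

open TensorProduct MvPolynomial

noncomputable section

variable {k : Type*} [Field k] [CharZero k] {V : Type*} [AddCommGroup V]
  [Module k V]

/-- {a,{b,c}} as an element of V ⊗ k[∂₁,∂₂]. -/
def brABC (np : ℕ → V →ₗ[k] V →ₗ[k] V) (a b c : V) :
    V ⊗[k] MvPolynomial (Fin 2) k :=
  ∑ᶠ mn : ℕ × ℕ, ((mn.1.factorial * mn.2.factorial : k)⁻¹) •
    (np mn.1 a (np mn.2 b c) ⊗ₜ (X 0 ^ mn.1 * X 1 ^ mn.2))

/-- {b,{a,c}} as an element of V ⊗ k[∂₁,∂₂] (∂₁ is attached to a, ∂₂ to b). -/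
def brBAC (np : ℕ → V →ₗ[k] V →ₗ[k] V) (a b c : V) :
    V ⊗[k] MvPolynomial (Fin 2) k :=
  ∑ᶠ mn : ℕ × ℕ, ((mn.1.factorial * mn.2.factorial : k)⁻¹) •
    (np mn.2 b (np mn.1 a c) ⊗ₜ (X 0 ^ mn.1 * X 1 ^ mn.2))

/-- {{a,b},c} as an element of V ⊗ k[∂₁,∂₂], via ∂₃ ↦ ∂ − ∂₁ − ∂₂. -/
def brABc (np : ℕ → V →ₗ[k] V →ₗ[k] V) (a b c : V) :
    V ⊗[k] MvPolynomial (Fin 2) k :=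
  ∑ᶠ pq : ℕ × ℕ, ((pq.1.factorial * pq.2.factorial : k)⁻¹) •
    (np pq.2 (np pq.1 a b) c ⊗ₜ (X 0 ^ pq.1 * (X 0 + X 1) ^ pq.2))

namespace Stmt3Aux

open Finset

/-- The exponent `(m, n)` as a finitely-supported function on `Fin 2`. -/
def ee (m n : ℕ) : Fin 2 →₀ ℕ := Finsupp.single 0 m + Finsupp.single 1 n

lemma ee_inj {p q m n : ℕ} (h : ee p q = ee m n) : p = m ∧ q = n := by
  have h0 := DFunLike.congr_fun h 0
  have h1 := DFunLike.congr_fun h 1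
  simp [ee, Finsupp.single_apply, Finsupp.add_apply] at h0 h1
  exact ⟨h0, h1⟩

lemma X_pow_mul_X_pow (m n : ℕ) :
    (X 0 ^ m * X 1 ^ n : MvPolynomial (Fin 2) k) = monomial (ee m n) 1 := by
  rw [X_pow_eq_monomial, X_pow_eq_monomial, monomial_mul, one_mul]; rfl

/-- Coefficient extraction `V ⊗ k[∂₁,∂₂] → V` at the monomial `∂₁^m ∂₂^n`. -/
def cf (m n : ℕ) : V ⊗[k] MvPolynomial (Fin 2) k →ₗ[k] V :=
  (TensorProduct.rid k V).toLinearMap ∘ₗ LinearMap.lTensor V (lcoeff k (ee m n))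

lemma cf_tmul (m n : ℕ) (v : V) (p : MvPolynomial (Fin 2) k) :
    cf m n (v ⊗ₜ p) = coeff (ee m n) p • v := by
  simp [cf, LinearMap.lTensor_tmul, rid_tmul, lcoeff]

/-- Canonical-form element of `V ⊗ k[∂₁,∂₂]` with coefficient family `f`. -/
def T (f : ℕ × ℕ → V) : V ⊗[k] MvPolynomial (Fin 2) k :=
  ∑ᶠ mn : ℕ × ℕ, ((mn.1.factorial * mn.2.factorial : k)⁻¹) •
    (f mn ⊗ₜ (X 0 ^ mn.1 * X 1 ^ mn.2))

lemma T_eq_sum (f : ℕ × ℕ → V) (S : Finset (ℕ × ℕ)) (hf : ∀ mn ∉ S, f mn = 0) :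
    T (k := k) f = ∑ mn ∈ S, ((mn.1.factorial * mn.2.factorial : k)⁻¹) •
      (f mn ⊗ₜ (X 0 ^ mn.1 * X 1 ^ mn.2)) := by
  apply finsum_eq_sum_of_support_subset
  intro mn hmn
  simp only [Function.mem_support] at hmn
  by_contra h
  exact hmn (by rw [hf mn h, TensorProduct.zero_tmul, smul_zero])

lemma cf_T (m n : ℕ) (f : ℕ × ℕ → V) (S : Finset (ℕ × ℕ)) (hf : ∀ mn ∉ S, f mn = 0) :
    cf m n (T (k := k) f) = ((m.factorial * n.factorial : k)⁻¹) • f (m, n) := by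
  have hf' : ∀ mn ∉ insert (m, n) S, f mn = 0 :=
    fun mn h => hf mn (fun hs => h (mem_insert_of_mem hs))
  rw [T_eq_sum f _ hf', map_sum]
  have hterm : ∀ mn ∈ insert (m, n) S,
      cf m n (((mn.1.factorial * mn.2.factorial : k)⁻¹) •
        (f mn ⊗ₜ[k] (X 0 ^ mn.1 * X 1 ^ mn.2 : MvPolynomial (Fin 2) k)))
      = if mn = (m, n) then ((m.factorial * n.factorial : k)⁻¹) • f (m, n) else 0 := by
    intro mn _
    rw [map_smul, cf_tmul, X_pow_mul_X_pow, coeff_monomial]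
    by_cases h : mn = (m, n)
    · subst h; simp
    · have hne : ¬(ee mn.1 mn.2 = ee m n) := by
        intro he
        obtain ⟨h1, h2⟩ := ee_inj he
        exact h (Prod.ext h1 h2)
      rw [if_neg hne, if_neg h, zero_smul, smul_zero]
  rw [Finset.sum_congr rfl hterm, Finset.sum_ite_eq' _ (m, n),
    if_pos (mem_insert_self _ _)]

lemma exists_bound (N : ℕ) (M : ℕ → ℕ) : ∃ A, N ≤ A ∧ ∀ n < N, M n ≤ A :=
  ⟨max N ((range N).sup M), le_max_left _ _,
    fun n hn => le_trans (Finset.le_sup (mem_range.2 hn)) (le_max_right _ _)⟩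

lemma notmem_rect {A : ℕ} {mn : ℕ × ℕ} (h : mn ∉ Finset.range A ×ˢ Finset.range A) :
    A ≤ mn.1 ∨ A ≤ mn.2 := by
  simp only [Finset.mem_product, Finset.mem_range] at h
  omega

lemma coeff_eq (p q i : ℕ) (h : i ≤ q) :
    ((p.factorial * q.factorial : k))⁻¹ * (q.choose i)
      = (((p + i).factorial * (q - i).factorial : k))⁻¹ * ((p + i).choose p) := by
  have h1 : q.choose i * (i.factorial * (q - i).factorial) = q.factorial := by
    rw [← Nat.choose_mul_factorial_mul_factorial h]; ring
  have h2 : (p + i).choose p * (p.factorial * i.factorial) = (p + i).factorial := by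
    have h3 := Nat.choose_mul_factorial_mul_factorial (Nat.le_add_right p i)
    rw [Nat.add_sub_cancel_left] at h3
    rw [← h3]; ring
  have e1 : (q.factorial : k) = (q.choose i : k) * ((i.factorial : k) * ((q - i).factorial : k)) := by
    exact_mod_cast h1.symm
  have e2 : (((p + i).factorial : k)) = ((p + i).choose p : k) * ((p.factorial : k) * (i.factorial : k)) := by
    exact_mod_cast h2.symm
  have hp : (p.factorial : k) ≠ 0 := Nat.cast_ne_zero.2 p.factorial_ne_zero
  have hi : (i.factorial : k) ≠ 0 := Nat.cast_ne_zero.2 i.factorial_ne_zero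
  have hqi : ((q - i).factorial : k) ≠ 0 := Nat.cast_ne_zero.2 (q - i).factorial_ne_zero
  have hc1 : ((q.choose i : k)) ≠ 0 := Nat.cast_ne_zero.2 (Nat.choose_pos h).ne'
  have hc2 : (((p + i).choose p : k)) ≠ 0 :=
    Nat.cast_ne_zero.2 (Nat.choose_pos (Nat.le_add_right p i)).ne'
  rw [e1, e2]
  field_simp

/-- Expansion of a single term of `brABc` in the monomial basis. -/
lemma expand_term (p q : ℕ) (z : V) :
    ((p.factorial * q.factorial : k)⁻¹) •
        (z ⊗ₜ[k] (X 0 ^ p * (X 0 + X 1) ^ q : MvPolynomial (Fin 2) k))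
      = ∑ i ∈ Finset.range (q + 1), ((p.factorial * q.factorial : k)⁻¹ * (q.choose i)) •
          (z ⊗ₜ (X 0 ^ (p + i) * X 1 ^ (q - i))) := by
  rw [add_pow, Finset.mul_sum, tmul_sum, Finset.smul_sum]
  refine Finset.sum_congr rfl fun i _ => ?_
  have hp : (X 0 : MvPolynomial (Fin 2) k) ^ p *
      ((X 0) ^ i * (X 1) ^ (q - i) * (q.choose i : MvPolynomial (Fin 2) k))
      = (q.choose i : k) • ((X 0) ^ (p + i) * (X 1) ^ (q - i)) := by
    rw [smul_eq_C_mul, ← map_natCast (C : k →+* MvPolynomial (Fin 2) k)]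
    ring
  rw [hp, tmul_smul, smul_smul]

end Stmt3Aux

open Stmt3Aux Finset

set_option maxHeartbeats 1000000 in
theorem stmt3 (np : ℕ → V →ₗ[k] V →ₗ[k] V) (D : V →ₗ[k] V)
    (htrunc : ∀ a b : V, ∃ N : ℕ, ∀ n ≥ N, np n a b = 0) :
    (∀ a b c : V, brABC np a b c - brBAC np a b c = brABc np a b c) ↔
    (∀ (m n : ℕ) (a b c : V),
      np m a (np n b c) - np n b (np m a c)
        = ∑ j ∈ Finset.range (m + 1),
            m.choose j • np (m + n - j) (np j a b) c) := by
  classical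
  -- support bounds
  have suppABC : ∀ a b c : V, ∃ A : ℕ, ∀ mn : ℕ × ℕ,
      A ≤ mn.1 ∨ A ≤ mn.2 → np mn.1 a (np mn.2 b c) = 0 := by
    intro a b c
    obtain ⟨N, hN⟩ := htrunc b c
    choose M hM using fun n => htrunc a (np n b c)
    obtain ⟨A, hA1, hA2⟩ := exists_bound N M
    refine ⟨A, ?_⟩
    rintro ⟨m, n⟩ (h | h)
    · by_cases hn : n < N
      · exact hM n m (le_trans (hA2 n hn) h)
      · rw [hN n (le_of_not_gt hn), map_zero]
    · rw [hN n (le_trans hA1 h), map_zero]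
  have suppBAC : ∀ a b c : V, ∃ A : ℕ, ∀ mn : ℕ × ℕ,
      A ≤ mn.1 ∨ A ≤ mn.2 → np mn.2 b (np mn.1 a c) = 0 := by
    intro a b c
    obtain ⟨N, hN⟩ := htrunc a c
    choose M hM using fun m => htrunc b (np m a c)
    obtain ⟨A, hA1, hA2⟩ := exists_bound N M
    refine ⟨A, ?_⟩
    rintro ⟨m, n⟩ (h | h)
    · rw [hN m (le_trans hA1 h), map_zero]
    · by_cases hm : m < N
      · exact hM m n (le_trans (hA2 m hm) h)
      · rw [hN m (le_of_not_gt hm), map_zero]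
  have suppZ : ∀ a b c : V, ∃ A : ℕ, ∀ pq : ℕ × ℕ,
      A ≤ pq.1 ∨ A ≤ pq.2 → np pq.2 (np pq.1 a b) c = 0 := by
    intro a b c
    obtain ⟨N, hN⟩ := htrunc a b
    choose M hM using fun p => htrunc (np p a b) c
    obtain ⟨A, hA1, hA2⟩ := exists_bound N M
    refine ⟨A, ?_⟩
    rintro ⟨p, q⟩ (h | h)
    · rw [hN p (le_trans hA1 h), map_zero, LinearMap.zero_apply]
    · by_cases hp : p < N
      · exact hM p q (le_trans (hA2 p hp) h)
      · rw [hN p (le_of_not_gt hp), map_zero, LinearMap.zero_apply]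
  -- brABC - brBAC in canonical form
  have keyG : ∀ a b c : V, brABC np a b c - brBAC np a b c
      = T (fun mn : ℕ × ℕ => np mn.1 a (np mn.2 b c) - np mn.2 b (np mn.1 a c)) := by
    intro a b c
    obtain ⟨A1, h1⟩ := suppABC a b c
    obtain ⟨A2, h2⟩ := suppBAC a b c
    set A := max A1 A2 with hA
    set S : Finset (ℕ × ℕ) := Finset.range A ×ˢ Finset.range A with hS
    have hf1 : ∀ mn ∉ S, np mn.1 a (np mn.2 b c) = 0 := by
      intro mn h
      exact h1 mn (by rcases notmem_rect h with h' | h' <;> [left; right] <;> omega)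
    have hf2 : ∀ mn ∉ S, np mn.2 b (np mn.1 a c) = 0 := by
      intro mn h
      exact h2 mn (by rcases notmem_rect h with h' | h' <;> [left; right] <;> omega)
    have hf12 : ∀ mn ∉ S, np mn.1 a (np mn.2 b c) - np mn.2 b (np mn.1 a c) = 0 := by
      intro mn h; rw [hf1 mn h, hf2 mn h, sub_zero]
    have e1 : brABC np a b c = T (fun mn : ℕ × ℕ => np mn.1 a (np mn.2 b c)) := rfl
    have e2 : brBAC np a b c = T (fun mn : ℕ × ℕ => np mn.2 b (np mn.1 a c)) := rfl
    rw [e1, e2, T_eq_sum _ S hf1, T_eq_sum _ S hf2, T_eq_sum _ S hf12,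
      ← Finset.sum_sub_distrib]
    refine Finset.sum_congr rfl fun mn _ => ?_
    rw [TensorProduct.sub_tmul, smul_sub]
  -- brABc in canonical form
  have key : ∀ a b c : V, brABc np a b c
      = T (fun mn : ℕ × ℕ => ∑ j ∈ Finset.range (mn.1 + 1),
          mn.1.choose j • np (mn.1 + mn.2 - j) (np j a b) c) := by
    intro a b c
    obtain ⟨A, hZ⟩ := suppZ a b c
    set R1 : Finset (ℕ × ℕ) := Finset.range A ×ˢ Finset.range A with hR1
    set R2 : Finset (ℕ × ℕ) := Finset.range (2 * A) ×ˢ Finset.range (2 * A) with hR2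
    set F : ℕ × ℕ → V := fun mn => ∑ j ∈ Finset.range (mn.1 + 1),
        mn.1.choose j • np (mn.1 + mn.2 - j) (np j a b) c with hF
    have hFsupp : ∀ mn ∉ R2, F mn = 0 := by
      intro mn h
      have h' := notmem_rect h
      apply Finset.sum_eq_zero
      intro j hj
      rw [Finset.mem_range] at hj
      have : np (mn.1 + mn.2 - j) (np j a b) c = 0 := by
        by_cases hjA : A ≤ j
        · exact hZ (j, mn.1 + mn.2 - j) (Or.inl hjA)
        · exact hZ (j, mn.1 + mn.2 - j) (Or.inr (by omega))
      rw [this, smul_zero]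
    -- left side as a finset sum
    have hL : brABc np a b c = ∑ pq ∈ R1, ((pq.1.factorial * pq.2.factorial : k)⁻¹) •
        (np pq.2 (np pq.1 a b) c ⊗ₜ[k] (X 0 ^ pq.1 * (X 0 + X 1) ^ pq.2 : MvPolynomial (Fin 2) k)) := by
      apply finsum_eq_sum_of_support_subset
      intro pq hpq
      simp only [Function.mem_support] at hpq
      by_contra h
      exact hpq (by rw [hZ pq (notmem_rect h), TensorProduct.zero_tmul, smul_zero])
    rw [hL, T_eq_sum F R2 hFsupp]
    -- expand both sides into double sums
    have hLexp : ∀ pq : ℕ × ℕ, ((pq.1.factorial * pq.2.factorial : k)⁻¹) •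
        (np pq.2 (np pq.1 a b) c ⊗ₜ[k] (X 0 ^ pq.1 * (X 0 + X 1) ^ pq.2 : MvPolynomial (Fin 2) k))
        = ∑ i ∈ Finset.range (pq.2 + 1),
            ((pq.1.factorial * pq.2.factorial : k)⁻¹ * (pq.2.choose i)) •
              (np pq.2 (np pq.1 a b) c ⊗ₜ[k] (X 0 ^ (pq.1 + i) * X 1 ^ (pq.2 - i) : MvPolynomial (Fin 2) k)) :=
      fun pq => expand_term pq.1 pq.2 _
    have hRexp : ∀ mn : ℕ × ℕ, ((mn.1.factorial * mn.2.factorial : k)⁻¹) •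
        (F mn ⊗ₜ[k] (X 0 ^ mn.1 * X 1 ^ mn.2 : MvPolynomial (Fin 2) k))
        = ∑ j ∈ Finset.range (mn.1 + 1),
            ((mn.1.factorial * mn.2.factorial : k)⁻¹ * (mn.1.choose j)) •
              (np (mn.1 + mn.2 - j) (np j a b) c ⊗ₜ[k] (X 0 ^ mn.1 * X 1 ^ mn.2 : MvPolynomial (Fin 2) k)) := by
      intro mn
      simp only [hF]
      rw [TensorProduct.sum_tmul, Finset.smul_sum]
      refine Finset.sum_congr rfl fun j _ => ?_
      rw [← Nat.cast_smul_eq_nsmul k (mn.1.choose j), TensorProduct.smul_tmul', smul_smul]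
      exact TensorProduct.smul_tmul' _ _ _
    rw [Finset.sum_congr rfl fun pq _ => hLexp pq,
      Finset.sum_congr rfl fun mn _ => hRexp mn]
    rw [Finset.sum_sigma', Finset.sum_sigma']
    -- shrink the right-hand index set
    rw [show (R2.sigma fun mn => Finset.range (mn.1 + 1))
          = ((R2.sigma fun mn => Finset.range (mn.1 + 1)).filter
              (fun y => y.2 < A ∧ y.1.1 + y.1.2 - y.2 < A)) ∪
            ((R2.sigma fun mn => Finset.range (mn.1 + 1)).filter
              (fun y => ¬(y.2 < A ∧ y.1.1 + y.1.2 - y.2 < A)))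
        from (Finset.filter_union_filter_not_eq _ _).symm,
      Finset.sum_union (Finset.disjoint_filter_filter_not _ _ _)]
    have hzero : ∑ y ∈ ((R2.sigma fun mn => Finset.range (mn.1 + 1)).filter
        (fun y => ¬(y.2 < A ∧ y.1.1 + y.1.2 - y.2 < A))),
        ((y.1.1.factorial * y.1.2.factorial : k)⁻¹ * (y.1.1.choose y.2)) •
          (np (y.1.1 + y.1.2 - y.2) (np y.2 a b) c ⊗ₜ[k] (X 0 ^ y.1.1 * X 1 ^ y.1.2 : MvPolynomial (Fin 2) k)) = 0 := by
      apply Finset.sum_eq_zero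
      intro y hy
      rw [Finset.mem_filter] at hy
      have : np (y.1.1 + y.1.2 - y.2) (np y.2 a b) c = 0 := by
        apply hZ (y.2, y.1.1 + y.1.2 - y.2)
        simp only
        omega
      rw [this, TensorProduct.zero_tmul, smul_zero]
    rw [hzero, add_zero]
    -- the bijection
    refine Finset.sum_nbij' (fun x => ⟨(x.1.1 + x.2, x.1.2 - x.2), x.1.1⟩)
      (fun y => ⟨(y.2, y.1.1 + y.1.2 - y.2), y.1.1 - y.2⟩) ?_ ?_ ?_ ?_ ?_
    · intro x hx
      simp only [Finset.mem_sigma, Finset.mem_filter, Finset.mem_product,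
        Finset.mem_range, hR1, hR2] at hx ⊢
      omega
    · intro y hy
      simp only [Finset.mem_sigma, Finset.mem_filter, Finset.mem_product,
        Finset.mem_range, hR1, hR2] at hy ⊢
      omega
    · rintro ⟨⟨p, q⟩, i⟩ hx
      simp only [Finset.mem_sigma, Finset.mem_product, Finset.mem_range, hR1] at hx
      show (⟨(p, p + i + (q - i) - p), p + i - p⟩ : (_ : ℕ × ℕ) × ℕ) = ⟨(p, q), i⟩
      rw [show p + i + (q - i) - p = q by omega, show p + i - p = i by omega]
    · rintro ⟨⟨m, n⟩, j⟩ hy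
      simp only [Finset.mem_sigma, Finset.mem_filter, Finset.mem_product,
        Finset.mem_range, hR2] at hy
      show (⟨(j + (m - j), m + n - j - (m - j)), j⟩ : (_ : ℕ × ℕ) × ℕ) = ⟨(m, n), j⟩
      rw [show j + (m - j) = m by omega, show m + n - j - (m - j) = n by omega]
    · intro x hx
      simp only [Finset.mem_sigma, Finset.mem_product, Finset.mem_range, hR1] at hx
      have hiq : x.2 ≤ x.1.2 := by omega
      have hidx : x.1.1 + x.2 + (x.1.2 - x.2) - x.1.1 = x.1.2 := by omega
      simp only [hidx]
      rw [coeff_eq x.1.1 x.1.2 x.2 hiq]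
  constructor
  · -- Jacobi ⇒ Borcherds
    intro h m n a b c
    have hTG : T (fun mn : ℕ × ℕ => np mn.1 a (np mn.2 b c) - np mn.2 b (np mn.1 a c))
        = T (fun mn : ℕ × ℕ => ∑ j ∈ Finset.range (mn.1 + 1),
            mn.1.choose j • np (mn.1 + mn.2 - j) (np j a b) c) :=
      (keyG a b c).symm.trans ((h a b c).trans (key a b c))
    obtain ⟨A1, h1⟩ := suppABC a b c
    obtain ⟨A2, h2⟩ := suppBAC a b c
    obtain ⟨A3, h3⟩ := suppZ a b c
    set A := max (max A1 A2) (2 * A3) with hA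
    set S : Finset (ℕ × ℕ) := Finset.range A ×ˢ Finset.range A with hS
    have hG : ∀ mn ∉ S, np mn.1 a (np mn.2 b c) - np mn.2 b (np mn.1 a c) = 0 := by
      intro mn hmn
      have h' := notmem_rect hmn
      rw [h1 mn (by omega), h2 mn (by omega), sub_zero]
    have hF : ∀ mn ∉ S, (∑ j ∈ Finset.range (mn.1 + 1),
        mn.1.choose j • np (mn.1 + mn.2 - j) (np j a b) c) = 0 := by
      intro mn hmn
      have h' := notmem_rect hmn
      apply Finset.sum_eq_zero
      intro j hj
      rw [Finset.mem_range] at hj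
      have : np (mn.1 + mn.2 - j) (np j a b) c = 0 := by
        by_cases hjA : A3 ≤ j
        · exact h3 (j, mn.1 + mn.2 - j) (Or.inl hjA)
        · exact h3 (j, mn.1 + mn.2 - j) (Or.inr (by omega))
      rw [this, smul_zero]
    have hcf := congrArg (cf (k := k) m n) hTG
    rw [cf_T m n _ S hG, cf_T m n _ S hF] at hcf
    have hne : ((m.factorial * n.factorial : k))⁻¹ ≠ 0 :=
      inv_ne_zero (mul_ne_zero (Nat.cast_ne_zero.2 m.factorial_ne_zero)
        (Nat.cast_ne_zero.2 n.factorial_ne_zero))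
    exact smul_right_injective V hne hcf
  · -- Borcherds ⇒ Jacobi
    intro h a b c
    rw [keyG a b c, key a b c]
    exact congrArg T (funext fun mn => h mn.1 mn.2 a b c)

end
end

section
/- Let g^• be a cosimplicial Lie algebra over a field k of characteristic 0 and Mg its cochain complex with the bracket [a,b] = [σ(a),τ(b)] as above. Then the induced bracket on cohomology H^•(Mg) is graded skew-symmetric: [β,α] = −(−1)^{pq}[α,β] for α ∈ H^p, β ∈ H^q. -/
/- STATEMENT 16: For a cosimplicial Lie algebra g^• with the bracket
[a,b] = [σ(a),τ(b)] on its cochain complex, the induced bracket on cohomology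
is graded skew-symmetric: [β,α] = −(−1)^{pq}[α,β].  On cocycles: the
discrepancy [a,b] + (−1)^{pq}[b,a] is a coboundary (in degree 0 it vanishes,
there being no coboundaries). -/

open CategoryTheory SimplexCategory

universe u v

/-- A cosimplicial Lie algebra over k: a functor from the simplex category
to Lie algebras over k. -/
structure CosimpLie (k : Type v) [CommRing k] where
  g : ℕ → Type u
  lieRing : ∀ n, LieRing (g n)
  lieAlg : ∀ n, LieAlgebra k (g n)
  map : ∀ {m n : ℕ}, (SimplexCategory.mk m ⟶ SimplexCategory.mk n) → (g m →ₗ⁅k⁆ g n)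
  map_id : ∀ (n : ℕ) (x : g n), map (𝟙 (SimplexCategory.mk n)) x = x
  map_comp : ∀ {m n l : ℕ} (f : SimplexCategory.mk m ⟶ SimplexCategory.mk n)
    (h : SimplexCategory.mk n ⟶ SimplexCategory.mk l) (x : g m),
    map (f ≫ h) x = map h (map f x)

attribute [instance] CosimpLie.lieRing CosimpLie.lieAlg

variable {k : Type v} [CommRing k]

/-- Transport along an equality of cosimplicial degrees. -/
def CosimpLie.cst (F : CosimpLie k) {m n : ℕ} (h : m = n) : F.g m → F.g n :=
  fun x => h ▸ x

/-- The differential of the cochain complex Mg: the alternating sum of the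
coface maps. -/
def CosimpLie.D (F : CosimpLie k) (n : ℕ) (x : F.g n) : F.g (n + 1) :=
  ∑ i : Fin (n + 2), ((-1 : ℤ) ^ (i : ℕ)) • F.map (SimplexCategory.δ i) x

/-- The front inclusion [p] → [p+q], i ↦ i. -/
def frontIncl (p q : ℕ) : SimplexCategory.mk p ⟶ SimplexCategory.mk (p + q) :=
  SimplexCategory.mkHom ⟨fun i => Fin.castLE (by omega) i, fun a b hab => hab⟩

/-- The back inclusion [q] → [p+q], i ↦ i + p. -/
def backIncl (p q : ℕ) : SimplexCategory.mk q ⟶ SimplexCategory.mk (p + q) :=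
  SimplexCategory.mkHom
    ⟨fun i => ⟨p + i, by omega⟩, fun a b hab => by
      simp only [Fin.mk_le_mk, Fin.le_def] at *; omega⟩

/-- The bracket [a,b] := [σ(a), τ(b)] on the cochain complex of a
cosimplicial Lie algebra (σ, τ the front/back inclusions). -/
def CosimpLie.cup (F : CosimpLie k) {p q : ℕ} (a : F.g p) (b : F.g q) :
    F.g (p + q) :=
  ⁅F.map (frontIncl p q) a, F.map (backIncl p q) b⁆

/-! ### infrastructure -/

/-- jump map: `x ↦ min n (if x < t then x else x + s)` as a morphism `[m] ⟶ [n]`. -/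
def jm (m n t s : ℕ) : SimplexCategory.mk m ⟶ SimplexCategory.mk n :=
  SimplexCategory.mkHom
    { toFun := fun x => ⟨min n (if x.val < t then x.val else x.val + s), by omega⟩
      monotone' := by
        intro x y hxy
        have h' : x.val ≤ y.val := hxy
        simp only [Fin.mk_le_mk]
        split_ifs <;> omega }

lemma jm_val (m n t s : ℕ) (x : Fin (m + 1)) :
    (((jm m n t s).toOrderHom x) : ℕ) = min n (if x.val < t then x.val else x.val + s) := rfl

lemma hom_ext' {m n : ℕ} (f g : SimplexCategory.mk m ⟶ SimplexCategory.mk n)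
    (h : ∀ x : Fin (m + 1), ((f.toOrderHom x) : ℕ) = ((g.toOrderHom x) : ℕ)) : f = g := by
  apply SimplexCategory.Hom.ext
  ext x
  exact h x

lemma comp_val {l m n : ℕ} (f : SimplexCategory.mk l ⟶ SimplexCategory.mk m)
    (g : SimplexCategory.mk m ⟶ SimplexCategory.mk n) (x : Fin (l + 1)) :
    (((f ≫ g).toOrderHom x) : ℕ) = ((g.toOrderHom (f.toOrderHom x)) : ℕ) := rfl

/-- ℕ-valued evaluation of a morphism of `SimplexCategory`, clamping the input. -/
def vv {m n : ℕ} (f : SimplexCategory.mk m ⟶ SimplexCategory.mk n) (x : ℕ) : ℕ :=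
  (f.toOrderHom ⟨min m x, by simp only [SimplexCategory.len_mk]; omega⟩).val

lemma vv_le {m n : ℕ} (f : SimplexCategory.mk m ⟶ SimplexCategory.mk n) (x : ℕ) :
    vv f x ≤ n := by
  rw [vv]
  have := (f.toOrderHom ⟨min m x, by simp only [SimplexCategory.len_mk]; omega⟩).isLt
  simp only [SimplexCategory.len_mk] at this
  omega

lemma hom_ext2 {m n : ℕ} (f g : SimplexCategory.mk m ⟶ SimplexCategory.mk n)
    (h : ∀ x : ℕ, x ≤ m → vv f x = vv g x) : f = g := by
  apply hom_ext'
  intro x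
  have hx : (x : ℕ) ≤ m := by omega
  have h1 : (⟨min m x.val, by omega⟩ : Fin (m + 1)) = x := by
    apply Fin.ext; simp; omega
  have := h x.val hx
  rw [vv, vv, h1] at this
  exact this

lemma comp_vv {l m n : ℕ} (f : SimplexCategory.mk l ⟶ SimplexCategory.mk m)
    (g : SimplexCategory.mk m ⟶ SimplexCategory.mk n) (x : ℕ) :
    vv (f ≫ g) x = vv g (vv f x) := by
  have h1 : vv f x ≤ m := vv_le f x
  rw [vv, vv, comp_val]
  have h2 : f.toOrderHom ⟨min l x, by simp only [SimplexCategory.len_mk]; omega⟩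
      = ⟨min m (vv f x), by simp only [SimplexCategory.len_mk]; omega⟩ := by
    apply Fin.ext
    simp only [Fin.val_mk]
    have h3 : vv f x
        = (f.toOrderHom ⟨min l x, by simp only [SimplexCategory.len_mk]; omega⟩).val := rfl
    omega
  rw [h2]

lemma jm_vv (m n t s : ℕ) (x : ℕ) :
    vv (jm m n t s) x = min n (if min m x < t then min m x else min m x + s) := rfl

lemma frontIncl_vv (p q x : ℕ) : vv (frontIncl p q) x = min p x := rfl

lemma backIncl_vv (p q x : ℕ) : vv (backIncl p q) x = p + min q x := rfl

lemma eqToHom_vv {m n : ℕ} (h : SimplexCategory.mk m = SimplexCategory.mk n) (x : ℕ) :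
    vv (eqToHom h) x = min m x := by
  have hmn : m = n := by
    have := congrArg SimplexCategory.len h
    simpa using this
  subst hmn
  rfl

lemma delta_val {n : ℕ} (i : Fin (n + 2)) (x : Fin (n + 1)) :
    (((SimplexCategory.δ i).toOrderHom x) : ℕ) = if x.val < i.val then x.val else x.val + 1 := by
  show (Fin.succAbove i x).val = _
  rw [Fin.succAbove]
  split_ifs with h1 h2 h2 <;>
    simp only [Fin.lt_def, Fin.coe_castSucc, Fin.val_succ] at * <;> omega

lemma delta_eq_jm {n : ℕ} (i : Fin (n + 2)) :
    SimplexCategory.δ i = jm n (n + 1) i.val 1 := by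
  apply hom_ext'
  intro x
  have hx : (x : ℕ) < n + 1 := x.isLt
  rw [jm_val, delta_val]
  split_ifs <;> omega

lemma frontIncl_val (p q : ℕ) (x : Fin (p + 1)) :
    (((frontIncl p q).toOrderHom x) : ℕ) = x := rfl

lemma backIncl_val (p q : ℕ) (x : Fin (q + 1)) :
    (((backIncl p q).toOrderHom x) : ℕ) = p + x := rfl

lemma eqToHom_val {m n : ℕ} (h : m = n) (x : Fin (m + 1)) :
    (((eqToHom (congrArg SimplexCategory.mk h)).toOrderHom x) : ℕ) = x := by
  subst h; rfl

lemma CosimpLie.cst_lie (F : CosimpLie k) {m n : ℕ} (h : m = n) (x y : F.g m) :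
    F.cst h ⁅x, y⁆ = ⁅F.cst h x, F.cst h y⁆ := by subst h; rfl

lemma CosimpLie.cst_zero (F : CosimpLie k) {m n : ℕ} (h : m = n) :
    F.cst h (0 : F.g m) = 0 := by subst h; rfl

lemma CosimpLie.cst_map (F : CosimpLie k) {l m n : ℕ} (h : m = n)
    (u : SimplexCategory.mk l ⟶ SimplexCategory.mk m) (z : F.g l) :
    F.cst h (F.map u z) = F.map (u ≫ eqToHom (congrArg SimplexCategory.mk h)) z := by
  subst h
  simp only [eqToHom_refl, Category.comp_id]
  rfl

lemma Fmap_sum (F : CosimpLie k) {m n : ℕ} (u : SimplexCategory.mk m ⟶ SimplexCategory.mk n)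
    {ι : Type*} (s : Finset ι) (f : ι → F.g m) :
    F.map u (∑ i ∈ s, f i) = ∑ i ∈ s, F.map u (f i) := by
  exact map_sum ((F.map u).toLinearMap) f s

lemma Fmap_zsmul (F : CosimpLie k) {m n : ℕ} (u : SimplexCategory.mk m ⟶ SimplexCategory.mk n)
    (c : ℤ) (x : F.g m) : F.map u (c • x) = c • F.map u x := by
  exact map_zsmul ((F.map u).toLinearMap) c x

lemma Fmap_zero (F : CosimpLie k) {m n : ℕ} (u : SimplexCategory.mk m ⟶ SimplexCategory.mk n) :
    F.map u (0 : F.g m) = 0 := by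
  exact map_zero ((F.map u).toLinearMap)

lemma sum_lie' {L : Type*} [LieRing L] {ι : Type*} (s : Finset ι) (f : ι → L) (y : L) :
    ⁅∑ i ∈ s, f i, y⁆ = ∑ i ∈ s, ⁅f i, y⁆ :=
  map_sum (AddMonoidHom.mk' (fun x => ⁅x, y⁆) (fun _ _ => add_lie _ _ _)) f s

lemma lie_sum' {L : Type*} [LieRing L] {ι : Type*} (s : Finset ι) (f : ι → L) (y : L) :
    ⁅y, ∑ i ∈ s, f i⁆ = ∑ i ∈ s, ⁅y, f i⁆ :=
  map_sum (AddMonoidHom.mk' (fun x => ⁅y, x⁆) (fun _ _ => lie_add _ _ _)) f s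

lemma D_eq (F : CosimpLie k) (n : ℕ) (x : F.g n) :
    F.D n x = ∑ i ∈ Finset.range (n + 2), (-1 : ℤ) ^ i • F.map (jm n (n + 1) i 1) x := by
  rw [CosimpLie.D,
    ← Fin.sum_univ_eq_sum_range (fun i => (-1 : ℤ) ^ i • F.map (jm n (n + 1) i 1) x) (n + 2)]
  apply Finset.sum_congr rfl
  intro i _
  rw [delta_eq_jm]

lemma D_zsmul (F : CosimpLie k) (n : ℕ) (c : ℤ) (x : F.g n) :
    F.D n (c • x) = c • F.D n x := by
  rw [D_eq, D_eq, Finset.smul_sum]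
  apply Finset.sum_congr rfl
  intro i _
  rw [Fmap_zsmul, smul_comm]

lemma D_zero (F : CosimpLie k) (n : ℕ) : F.D n (0 : F.g n) = 0 := by
  rw [D_eq]
  simp [Fmap_zero]

/-! ### the cup-one homotopy -/

section Main

variable (F : CosimpLie k) (p q' : ℕ) (a : F.g p) (b : F.g (q' + 1))

/-- Terms `⁅(δ_r ≫ F'_{j'}) a, G'_{j'} b⁆` appearing in `(Da) ∪₁ b`. -/
def TA (j' r : ℕ) : F.g (p + q' + 1) :=
  ⁅F.map (jm p (p + 1) r 1 ≫ jm (p + 1) (p + q' + 1) (j' + 1) q') a,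
   F.map (jm (q' + 1) (p + q' + 1) 0 j') b⁆

/-- Terms `⁅F''_j a, (δ_s ≫ G''_j) b⁆` appearing in `a ∪₁ (Db)`. -/
def TB (j s : ℕ) : F.g (p + q' + 1) :=
  ⁅F.map (jm p (p + q' + 1) (j + 1) (q' + 1)) a,
   F.map (jm (q' + 1) (q' + 2) s 1 ≫ jm (q' + 2) (p + q' + 1) 0 j) b⁆

/-- Terms of `D (a ∪₁ b)`. -/
def LL (i j : ℕ) : F.g (p + q' + 1) :=
  ⁅F.map (jm p (p + q') (j + 1) q' ≫ jm (p + q') (p + q' + 1) i 1) a,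
   F.map (jm (q' + 1) (p + q') 0 j ≫ jm (p + q') (p + q' + 1) i 1) b⁆

/-- The cup-one product `a ∪₁ b`. -/
def cupw : F.g (p + q') :=
  ∑ j ∈ Finset.range p, (-1 : ℤ) ^ (j * q') •
    ⁅F.map (jm p (p + q') (j + 1) q') a, F.map (jm (q' + 1) (p + q') 0 j) b⁆

/-- Partial sums used in the telescope. -/
def Rj (j : ℕ) : F.g (p + q' + 1) :=
  (-1 : ℤ) ^ (j * q') • ∑ r ∈ Finset.range (j + 1), (-1 : ℤ) ^ r • TA F p q' a b j r

lemma TA_zero (ha : F.D p a = 0) (j' : ℕ) :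
    ∑ r ∈ Finset.range (p + 2), (-1 : ℤ) ^ r • TA F p q' a b j' r = 0 := by
  have h : ∀ r : ℕ, TA F p q' a b j' r =
      ⁅F.map (jm (p + 1) (p + q' + 1) (j' + 1) q') (F.map (jm p (p + 1) r 1) a),
       F.map (jm (q' + 1) (p + q' + 1) 0 j') b⁆ := by
    intro r; rw [TA, F.map_comp]
  calc ∑ r ∈ Finset.range (p + 2), (-1 : ℤ) ^ r • TA F p q' a b j' r
      = ⁅F.map (jm (p + 1) (p + q' + 1) (j' + 1) q')
          (∑ r ∈ Finset.range (p + 2), (-1 : ℤ) ^ r • F.map (jm p (p + 1) r 1) a),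
         F.map (jm (q' + 1) (p + q' + 1) 0 j') b⁆ := by
        rw [Fmap_sum, sum_lie']
        apply Finset.sum_congr rfl
        intro r _
        rw [h r, Fmap_zsmul, zsmul_lie]
    _ = 0 := by rw [← D_eq, ha, Fmap_zero, zero_lie]

lemma TB_zero (hb : F.D (q' + 1) b = 0) (j : ℕ) :
    ∑ s ∈ Finset.range (q' + 3), (-1 : ℤ) ^ s • TB F p q' a b j s = 0 := by
  have h : ∀ s : ℕ, TB F p q' a b j s =
      ⁅F.map (jm p (p + q' + 1) (j + 1) (q' + 1)) a,
       F.map (jm (q' + 2) (p + q' + 1) 0 j) (F.map (jm (q' + 1) (q' + 2) s 1) b)⁆ := by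
    intro s; rw [TB, F.map_comp]
  calc ∑ s ∈ Finset.range (q' + 3), (-1 : ℤ) ^ s • TB F p q' a b j s
      = ⁅F.map (jm p (p + q' + 1) (j + 1) (q' + 1)) a,
         F.map (jm (q' + 2) (p + q' + 1) 0 j)
          (∑ s ∈ Finset.range (q' + 3), (-1 : ℤ) ^ s • F.map (jm (q' + 1) (q' + 2) s 1) b)⁆ := by
        rw [Fmap_sum, lie_sum']
        apply Finset.sum_congr rfl
        intro s _
        rw [h s, Fmap_zsmul, lie_zsmul]
    _ = 0 := by rw [← D_eq, hb, Fmap_zero, lie_zero]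

end Main

/-! ### morphism identities -/

section Moreq

lemma e1a {p q' i j : ℕ} (hi : i ≤ j) (hj : j < p) :
    jm p (p + q') (j + 1) q' ≫ jm (p + q') (p + q' + 1) i 1
      = jm p (p + 1) i 1 ≫ jm (p + 1) (p + q' + 1) (j + 1 + 1) q' := by
  apply hom_ext2; intro x hx
  simp only [comp_vv, jm_vv, frontIncl_vv, backIncl_vv, eqToHom_vv]
  split_ifs <;> omega

lemma e1b {p q' i j : ℕ} (hi : i ≤ j) (hj : j < p) :
    jm (q' + 1) (p + q') 0 j ≫ jm (p + q') (p + q' + 1) i 1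
      = jm (q' + 1) (p + q' + 1) 0 (j + 1) := by
  apply hom_ext2; intro x hx
  simp only [comp_vv, jm_vv, frontIncl_vv, backIncl_vv, eqToHom_vv]
  split_ifs <;> omega

lemma e2a {p q' k j : ℕ} (hk : k ≤ q') (hj : j < p) :
    jm p (p + q') (j + 1) q' ≫ jm (p + q') (p + q' + 1) (j + 1 + k) 1
      = jm p (p + q' + 1) (j + 1) (q' + 1) := by
  apply hom_ext2; intro x hx
  simp only [comp_vv, jm_vv, frontIncl_vv, backIncl_vv, eqToHom_vv]
  split_ifs <;> omega

lemma e2b {p q' k j : ℕ} (hk : k ≤ q') (hj : j < p) :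
    jm (q' + 1) (p + q') 0 j ≫ jm (p + q') (p + q' + 1) (j + 1 + k) 1
      = jm (q' + 1) (q' + 2) (k + 1) 1 ≫ jm (q' + 2) (p + q' + 1) 0 j := by
  apply hom_ext2; intro x hx
  simp only [comp_vv, jm_vv, frontIncl_vv, backIncl_vv, eqToHom_vv]
  split_ifs <;> omega

lemma e3a {p q' k j : ℕ} (hk : j + q' + 2 + k < p + q' + 2) (hj : j < p) :
    jm p (p + q') (j + 1) q' ≫ jm (p + q') (p + q' + 1) (j + q' + 2 + k) 1
      = jm p (p + 1) (j + 2 + k) 1 ≫ jm (p + 1) (p + q' + 1) (j + 1) q' := by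
  apply hom_ext2; intro x hx
  simp only [comp_vv, jm_vv, frontIncl_vv, backIncl_vv, eqToHom_vv]
  split_ifs <;> omega

lemma e3b {p q' k j : ℕ} (hk : j + q' + 2 + k < p + q' + 2) (hj : j < p) :
    jm (q' + 1) (p + q') 0 j ≫ jm (p + q') (p + q' + 1) (j + q' + 2 + k) 1
      = jm (q' + 1) (p + q' + 1) 0 j := by
  apply hom_ext2; intro x hx
  simp only [comp_vv, jm_vv, frontIncl_vv, backIncl_vv, eqToHom_vv]
  split_ifs <;> omega

lemma e4a {p q' j : ℕ} (hj : j < p) :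
    jm p (p + q' + 1) (j + 1) (q' + 1)
      = jm p (p + 1) (j + 1) 1 ≫ jm (p + 1) (p + q' + 1) (j + 1 + 1) q' := by
  apply hom_ext2; intro x hx
  simp only [comp_vv, jm_vv, frontIncl_vv, backIncl_vv, eqToHom_vv]
  split_ifs <;> omega

lemma e4b {p q' j : ℕ} (hj : j < p) :
    jm (q' + 1) (q' + 2) 0 1 ≫ jm (q' + 2) (p + q' + 1) 0 j
      = jm (q' + 1) (p + q' + 1) 0 (j + 1) := by
  apply hom_ext2; intro x hx
  simp only [comp_vv, jm_vv, frontIncl_vv, backIncl_vv, eqToHom_vv]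
  split_ifs <;> omega

lemma e5a {p q' j : ℕ} (hj : j < p) :
    jm p (p + q' + 1) (j + 1) (q' + 1)
      = jm p (p + 1) (j + 1) 1 ≫ jm (p + 1) (p + q' + 1) (j + 1) q' := by
  apply hom_ext2; intro x hx
  simp only [comp_vv, jm_vv, frontIncl_vv, backIncl_vv, eqToHom_vv]
  split_ifs <;> omega

lemma e5b {p q' j : ℕ} (hj : j < p) :
    jm (q' + 1) (q' + 2) (q' + 2) 1 ≫ jm (q' + 2) (p + q' + 1) 0 j
      = jm (q' + 1) (p + q' + 1) 0 j := by
  apply hom_ext2; intro x hx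
  simp only [comp_vv, jm_vv, frontIncl_vv, backIncl_vv, eqToHom_vv]
  split_ifs <;> omega

lemma e6a (p q' : ℕ) :
    jm p (p + 1) 0 1 ≫ jm (p + 1) (p + q' + 1) (0 + 1) q' = jm p (p + q' + 1) 0 (q' + 1) := by
  apply hom_ext2; intro x hx
  simp only [comp_vv, jm_vv, frontIncl_vv, backIncl_vv, eqToHom_vv]
  split_ifs <;> omega

lemma e7a (p q' : ℕ) :
    jm p (p + 1) (p + 1) 1 ≫ jm (p + 1) (p + q' + 1) (p + 1) q'
      = frontIncl p (q' + 1) := by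
  apply hom_ext2; intro x hx
  simp only [comp_vv, jm_vv, frontIncl_vv, backIncl_vv, eqToHom_vv]
  split_ifs <;> omega

lemma e7b (p q' : ℕ) :
    jm (q' + 1) (p + q' + 1) 0 p = backIncl p (q' + 1) := by
  apply hom_ext2; intro x hx
  simp only [comp_vv, jm_vv, frontIncl_vv, backIncl_vv, eqToHom_vv]
  split_ifs <;> omega

lemma c1 (p q' : ℕ) (h : q' + 1 + p = p + q' + 1) :
    frontIncl (q' + 1) p ≫ eqToHom (congrArg SimplexCategory.mk h)
      = jm (q' + 1) (p + q' + 1) 0 0 := by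
  apply hom_ext2; intro x hx
  simp only [comp_vv, jm_vv, frontIncl_vv, backIncl_vv]
  rw [eqToHom_vv]
  split_ifs <;> omega

lemma c2 (p q' : ℕ) (h : q' + 1 + p = p + q' + 1) :
    backIncl (q' + 1) p ≫ eqToHom (congrArg SimplexCategory.mk h)
      = jm p (p + q' + 1) 0 (q' + 1) := by
  apply hom_ext2; intro x hx
  simp only [comp_vv, jm_vv, frontIncl_vv, backIncl_vv]
  rw [eqToHom_vv]
  split_ifs <;> omega

end Moreq

/-! ### sign helpers -/

lemma sdrop {M : Type*} [AddCommGroup M] (e f : ℕ) (x : M) :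
    ((-1 : ℤ)) ^ (e + 2 * f) • x = ((-1 : ℤ)) ^ e • x := by
  rw [pow_add, pow_mul]
  norm_num

/-! ### the per-j telescoping identity -/

section Perj

variable (F : CosimpLie k) (p q' : ℕ) (a : F.g p) (b : F.g (q' + 1))

lemma perj (ha : F.D p a = 0) (hb : F.D (q' + 1) b = 0) (j : ℕ) (hj : j < p) :
    ∑ i ∈ Finset.range (p + q' + 2), (-1 : ℤ) ^ (i + j * q') • LL F p q' a b i j
      = (-1 : ℤ) ^ q' • (Rj F p q' a b (j + 1) - Rj F p q' a b j) := by
  set X := TA F p q' a b (j + 1) (j + 1) with hX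
  set Y := TA F p q' a b j (j + 1) with hY
  set SA1 := ∑ r ∈ Finset.range (j + 1 + 1), (-1 : ℤ) ^ r • TA F p q' a b (j + 1) r with hSA1
  set SA0 := ∑ r ∈ Finset.range (j + 1), (-1 : ℤ) ^ r • TA F p q' a b j r with hSA0
  -- split the sum into three consecutive pieces
  have hsplit : ∑ i ∈ Finset.range (p + q' + 2), (-1 : ℤ) ^ (i + j * q') • LL F p q' a b i j
      = (∑ i ∈ Finset.Ico 0 (j + 1), (-1 : ℤ) ^ (i + j * q') • LL F p q' a b i j)
        + (∑ i ∈ Finset.Ico (j + 1) (j + q' + 2), (-1 : ℤ) ^ (i + j * q') • LL F p q' a b i j)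
        + (∑ i ∈ Finset.Ico (j + q' + 2) (p + q' + 2),
            (-1 : ℤ) ^ (i + j * q') • LL F p q' a b i j) := by
    rw [Finset.sum_Ico_consecutive _ (by omega : 0 ≤ j + 1) (by omega : j + 1 ≤ j + q' + 2),
      Finset.sum_Ico_consecutive _ (by omega : 0 ≤ j + q' + 2)
        (by omega : j + q' + 2 ≤ p + q' + 2),
      Finset.range_eq_Ico]
  -- Sum 1 (i ≤ j)
  have hS1 : ∑ i ∈ Finset.Ico 0 (j + 1), (-1 : ℤ) ^ (i + j * q') • LL F p q' a b i j
      = (-1 : ℤ) ^ (j * q') • (SA1 - (-1 : ℤ) ^ (j + 1) • X) := by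
    have step : ∀ i ∈ Finset.range (j + 1),
        (-1 : ℤ) ^ (i + j * q') • LL F p q' a b i j
          = (-1 : ℤ) ^ (j * q') • ((-1 : ℤ) ^ i • TA F p q' a b (j + 1) i) := by
      intro i hi
      have hi' : i ≤ j := by
        simp only [Finset.mem_range] at hi; omega
      simp only [LL, TA]
      rw [e1a hi' hj, e1b hi' hj, smul_smul, ← pow_add,
        show j * q' + i = i + j * q' from by omega]
    rw [← Nat.Ico_zero_eq_range] at step
    rw [Finset.sum_congr rfl step, ← Finset.smul_sum]
    congr 1
    rw [eq_sub_iff_add_eq, hSA1, Finset.sum_range_succ, Nat.Ico_zero_eq_range]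
  -- Sum 2 (j+1 ≤ i ≤ j+q'+1)
  have hS2 : ∑ i ∈ Finset.Ico (j + 1) (j + q' + 2), (-1 : ℤ) ^ (i + j * q') • LL F p q' a b i j
      = (-1 : ℤ) ^ (j + 1 + j * q') • (X + (-1 : ℤ) ^ q' • Y) := by
    rw [Finset.sum_Ico_eq_sum_range, show j + q' + 2 - (j + 1) = q' + 1 from by omega]
    have step : ∀ kk ∈ Finset.range (q' + 1),
        (-1 : ℤ) ^ (j + 1 + kk + j * q') • LL F p q' a b (j + 1 + kk) j
          = (-1 : ℤ) ^ (j + 1 + j * q') • ((-1 : ℤ) ^ kk • TB F p q' a b j (kk + 1)) := by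
      intro kk hkk
      have hk' : kk ≤ q' := by
        simp only [Finset.mem_range] at hkk; omega
      simp only [LL, TB]
      rw [e2a hk' hj, e2b hk' hj, smul_smul, ← pow_add,
        show j + 1 + j * q' + kk = j + 1 + kk + j * q' from by omega]
    rw [Finset.sum_congr rfl step, ← Finset.smul_sum]
    congr 1
    -- remaining: ∑ kk in range (q'+1), (-1)^kk • TB j (kk+1) = X + (-1)^q' • Y
    have e4 : TB F p q' a b j 0 = X := by
      rw [hX]
      simp only [TB, TA]
      rw [e4a hj, e4b hj]
    have e5 : TB F p q' a b j (q' + 1 + 1) = Y := by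
      rw [hY]
      simp only [TB, TA]
      rw [show q' + 1 + 1 = q' + 2 from by omega, e5a hj, e5b hj]
    have h0 := TB_zero F p q' a b hb j
    rw [Finset.sum_range_succ, Finset.sum_range_succ'] at h0
    have hp1 : ∀ kk : ℕ, (-1 : ℤ) ^ (kk + 1) • TB F p q' a b j (kk + 1)
        = -((-1 : ℤ) ^ kk • TB F p q' a b j (kk + 1)) := by
      intro kk
      rw [pow_succ, mul_neg_one, neg_smul]
    simp only [hp1] at h0
    rw [Finset.sum_neg_distrib, pow_zero, one_smul, e4] at h0
    set S := ∑ kk ∈ Finset.range (q' + 1), (-1 : ℤ) ^ kk • TB F p q' a b j (kk + 1) with hS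
    have hE : (-1 : ℤ) ^ (q' + 1) • TB F p q' a b j (q' + 1 + 1) = -((-1 : ℤ) ^ q' • Y) := by
      rw [e5, pow_succ, mul_neg_one, neg_smul]
    rw [hE, neg_neg] at h0
    -- h0 : -S + X + (-1)^q' • Y = 0
    have hfin : X + (-1 : ℤ) ^ q' • Y - S = 0 := by
      rw [← h0]; abel
    exact (sub_eq_zero.mp hfin).symm
  -- Sum 3 (i ≥ j+q'+2)
  have hS3 : ∑ i ∈ Finset.Ico (j + q' + 2) (p + q' + 2),
        (-1 : ℤ) ^ (i + j * q') • LL F p q' a b i j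
      = (-1 : ℤ) ^ (q' + j * q') • (-(SA0 + (-1 : ℤ) ^ (j + 1) • Y)) := by
    rw [Finset.sum_Ico_eq_sum_range, show p + q' + 2 - (j + q' + 2) = p - j from by omega]
    have step : ∀ kk ∈ Finset.range (p - j),
        (-1 : ℤ) ^ (j + q' + 2 + kk + j * q') • LL F p q' a b (j + q' + 2 + kk) j
          = (-1 : ℤ) ^ (q' + j * q') • ((-1 : ℤ) ^ (j + 2 + kk) • TA F p q' a b j (j + 2 + kk)) := by
      intro kk hkk
      have hk' : j + q' + 2 + kk < p + q' + 2 := by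
        simp only [Finset.mem_range] at hkk; omega
      simp only [LL, TA]
      rw [e3a hk' hj, e3b hk' hj, smul_smul, ← pow_add,
        show q' + j * q' + (j + 2 + kk) = j + q' + 2 + kk + j * q' from by omega]
    rw [Finset.sum_congr rfl step, ← Finset.smul_sum]
    congr 1
    have h0 := TA_zero F p q' a b ha j
    rw [Finset.range_eq_Ico,
      ← Finset.sum_Ico_consecutive _ (by omega : 0 ≤ j + 2) (by omega : j + 2 ≤ p + 2),
      Nat.Ico_zero_eq_range, Finset.sum_Ico_eq_sum_range,
      show p + 2 - (j + 2) = p - j from by omega,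
      show j + 2 = j + 1 + 1 from by omega, Finset.sum_range_succ] at h0
    set S3 := ∑ kk ∈ Finset.range (p - j),
      (-1 : ℤ) ^ (j + 2 + kk) • TA F p q' a b j (j + 2 + kk) with hS3'
    rw [← hY, ← hSA0] at h0
    -- h0 : (SA0 + (-1)^(j+1) • Y) + S3 = 0
    exact eq_neg_of_add_eq_zero_right h0
  -- assemble
  have hR1 : (-1 : ℤ) ^ q' • Rj F p q' a b (j + 1) = (-1 : ℤ) ^ (j * q') • SA1 := by
    rw [Rj, smul_smul, ← pow_add, show q' + (j + 1) * q' = j * q' + 2 * q' from by ring, sdrop]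
  have hR0 : (-1 : ℤ) ^ q' • Rj F p q' a b j = (-1 : ℤ) ^ (q' + j * q') • SA0 := by
    rw [Rj, smul_smul, ← pow_add]
  rw [hsplit, hS1, hS2, hS3]
  conv_rhs => rw [smul_sub, hR1, hR0]
  module

end Perj

/-! ### the key homotopy formula -/

section Key

variable (F : CosimpLie k) (p q' : ℕ) (a : F.g p) (b : F.g (q' + 1))

lemma key (ha : F.D p a = 0) (hb : F.D (q' + 1) b = 0) :
    F.D (p + q') (cupw F p q' a b)
      = (-1 : ℤ) ^ q' • (Rj F p q' a b p - Rj F p q' a b 0) := by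
  rw [D_eq]
  have hmap : ∀ i : ℕ, F.map (jm (p + q') (p + q' + 1) i 1) (cupw F p q' a b)
      = ∑ j ∈ Finset.range p, (-1 : ℤ) ^ (j * q') • LL F p q' a b i j := by
    intro i
    rw [cupw, Fmap_sum]
    apply Finset.sum_congr rfl
    intro j _
    rw [Fmap_zsmul, LieHom.map_lie, LL, F.map_comp, F.map_comp]
  calc ∑ i ∈ Finset.range (p + q' + 2),
        (-1 : ℤ) ^ i • F.map (jm (p + q') (p + q' + 1) i 1) (cupw F p q' a b)
      = ∑ i ∈ Finset.range (p + q' + 2), ∑ j ∈ Finset.range p,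
          (-1 : ℤ) ^ (i + j * q') • LL F p q' a b i j := by
        apply Finset.sum_congr rfl
        intro i _
        rw [hmap i, Finset.smul_sum]
        apply Finset.sum_congr rfl
        intro j _
        rw [smul_smul, ← pow_add]
    _ = ∑ j ∈ Finset.range p, ∑ i ∈ Finset.range (p + q' + 2),
          (-1 : ℤ) ^ (i + j * q') • LL F p q' a b i j := Finset.sum_comm
    _ = ∑ j ∈ Finset.range p,
          (-1 : ℤ) ^ q' • (Rj F p q' a b (j + 1) - Rj F p q' a b j) := by
        apply Finset.sum_congr rfl
        intro j hj
        exact perj F p q' a b ha hb j (Finset.mem_range.mp hj)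
    _ = (-1 : ℤ) ^ q' • (Rj F p q' a b p - Rj F p q' a b 0) := by
        rw [← Finset.smul_sum, Finset.sum_range_sub (fun j => Rj F p q' a b j)]

lemma R0_eq : Rj F p q' a b 0
    = ⁅F.map (jm p (p + q' + 1) 0 (q' + 1)) a, F.map (jm (q' + 1) (p + q' + 1) 0 0) b⁆ := by
  rw [Rj, Finset.sum_range_one, pow_zero, one_smul, zero_mul, pow_zero, one_smul]
  simp only [TA]
  rw [e6a]

lemma Rp_eq (ha : F.D p a = 0) :
    Rj F p q' a b p = (-1 : ℤ) ^ (p * (q' + 1)) • TA F p q' a b p (p + 1) := by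
  have h0 := TA_zero F p q' a b ha p
  rw [Finset.sum_range_succ] at h0
  have hsum : ∑ r ∈ Finset.range (p + 1), (-1 : ℤ) ^ r • TA F p q' a b p r
      = -((-1 : ℤ) ^ (p + 1) • TA F p q' a b p (p + 1)) :=
    eq_neg_of_add_eq_zero_left h0
  rw [Rj, hsum, smul_neg, smul_smul, ← pow_add, ← neg_smul,
    ← neg_one_mul ((-1 : ℤ) ^ (p * q' + (p + 1))), ← pow_succ',
    show p * q' + (p + 1) + 1 = p * (q' + 1) + 2 * 1 from by ring, sdrop]

lemma cup_eq_TA : F.cup a b = TA F p q' a b p (p + 1) := by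
  simp only [CosimpLie.cup, TA]
  rw [e7a, e7b]

end Key

/-! ### vertex lemma for degree-0 cocycles -/

lemma vertex_const (F : CosimpLie k) (P : ℕ) (b : F.g 0) (hb : F.D 0 b = 0)
    (u v : SimplexCategory.mk 0 ⟶ SimplexCategory.mk P) : F.map u b = F.map v b := by
  have h01 : F.map (jm 0 1 0 1) b = F.map (jm 0 1 1 1) b := by
    have h := D_eq F 0 b
    rw [hb, Finset.sum_range_succ, Finset.sum_range_one, pow_zero, one_smul, pow_one,
      neg_smul, one_smul] at h
    have := (add_eq_zero_iff_eq_neg.mp h.symm)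
    rw [neg_neg] at this
    exact this
  have step : ∀ t : ℕ, t + 1 ≤ P →
      F.map (jm 0 P 0 (t + 1)) b = F.map (jm 0 P 0 t) b := by
    intro t ht
    have he1 : jm 0 P 0 (t + 1) = jm 0 1 0 1 ≫ jm 1 P 0 t := by
      apply hom_ext2; intro x hx
      simp only [comp_vv, jm_vv]
      split_ifs <;> omega
    have he2 : jm 0 1 1 1 ≫ jm 1 P 0 t = jm 0 P 0 t := by
      apply hom_ext2; intro x hx
      simp only [comp_vv, jm_vv]
      split_ifs <;> omega
    rw [he1, F.map_comp, h01, ← F.map_comp, he2]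
  have key0 : ∀ t : ℕ, t ≤ P → F.map (jm 0 P 0 t) b = F.map (jm 0 P 0 0) b := by
    intro t
    induction t with
    | zero => intro _; rfl
    | succ t ih => intro ht; rw [step t (by omega), ih (by omega)]
  have huv : ∀ w : SimplexCategory.mk 0 ⟶ SimplexCategory.mk P,
      w = jm 0 P 0 (vv w 0) := by
    intro w
    apply hom_ext2; intro x hx
    have h0 : x = 0 := by omega
    subst h0
    have := vv_le w 0
    simp only [jm_vv]
    split_ifs <;> omega
  rw [huv u, huv v, key0 _ (vv_le u 0), key0 _ (vv_le v 0)]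


theorem stmt16 (k : Type*) [Field k] [CharZero k] (F : CosimpLie k)
    (p q : ℕ) (a : F.g p) (b : F.g q)
    (ha : F.D p a = 0) (hb : F.D q b = 0) :
    (p + q = 0 → F.cst (show q + p = p + q by omega) (F.cup b a)
        + ((-1 : ℤ) ^ (p * q)) • F.cup a b = 0)
    ∧ ∀ (m : ℕ) (hm : m + 1 = p + q),
        ∃ w : F.g m,
          F.cst (show q + p = p + q by omega) (F.cup b a)
            + ((-1 : ℤ) ^ (p * q)) • F.cup a b
          = F.cst hm (F.D m w) := by
  constructor
  · intro h0
    have hp : p = 0 := by omega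
    have hq : q = 0 := by omega
    subst hp; subst hq
    have hfb : frontIncl 0 0 = backIncl 0 0 := by
      apply hom_ext2; intro x hx
      simp only [frontIncl_vv, backIncl_vv]
      omega
    show F.cup b a + (-1 : ℤ) ^ (0 * 0) • F.cup a b = 0
    simp only [CosimpLie.cup, hfb, Nat.zero_mul, pow_zero, one_smul]
    rw [← lie_skew]
    abel
  · intro m hm
    rcases Nat.eq_zero_or_pos q with hq0 | hqpos
    · -- q = 0 : the two vertex maps agree, discrepancy vanishes; w = 0
      subst hq0
      have hp : p = m + 1 := by omega
      subst hp
      refine ⟨0, ?_⟩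
      rw [D_zero, F.cst_zero]
      show F.cst (show 0 + (m + 1) = m + 1 + 0 by omega) (F.cup b a)
          + (-1 : ℤ) ^ ((m + 1) * 0) • F.cup a b = 0
      simp only [Nat.mul_zero, pow_zero, one_smul, CosimpLie.cup]
      rw [F.cst_lie, F.cst_map, F.cst_map]
      have hb' : F.map (frontIncl 0 (m + 1)
            ≫ eqToHom (congrArg SimplexCategory.mk (show 0 + (m + 1) = m + 1 + 0 by omega))) b
          = F.map (backIncl (m + 1) 0) b :=
        vertex_const F (m + 1) b hb _ _
      have ha' : backIncl 0 (m + 1)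
            ≫ eqToHom (congrArg SimplexCategory.mk (show 0 + (m + 1) = m + 1 + 0 by omega))
          = frontIncl (m + 1) 0 := by
        apply hom_ext2; intro x hx
        simp only [comp_vv, frontIncl_vv, backIncl_vv]
        rw [eqToHom_vv]
        omega
      rw [hb', ha']
      rw [← lie_skew]
      abel
    · -- q = q' + 1 : the cup-one homotopy
      obtain ⟨q', rfl⟩ : ∃ q'', q = q'' + 1 := ⟨q - 1, by omega⟩
      have hmval : m = p + q' := by omega
      subst hmval
      refine ⟨(-1 : ℤ) ^ q' • cupw F p q' a b, ?_⟩
      show @Eq (F.g (p + q' + 1))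
        (@HAdd.hAdd (F.g (p + q' + 1)) (F.g (p + q' + 1)) (F.g (p + q' + 1)) _
          (F.cst (show q' + 1 + p = p + q' + 1 by omega) (F.cup b a))
          ((-1 : ℤ) ^ (p * (q' + 1)) • F.cup a b))
        (F.D (p + q') ((-1 : ℤ) ^ q' • cupw F p q' a b))
      rw [D_zsmul, key F p q' a b ha hb, smul_smul, ← pow_add,
        show q' + q' = 0 + 2 * q' from by ring, sdrop, pow_zero, one_smul,
        Rp_eq F p q' a b ha, R0_eq, ← cup_eq_TA]
      have hback : F.cst (show q' + 1 + p = p + q' + 1 by omega) (F.cup b a)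
          = -(⁅F.map (jm p (p + q' + 1) 0 (q' + 1)) a,
              F.map (jm (q' + 1) (p + q' + 1) 0 0) b⁆) := by
        rw [CosimpLie.cup, F.cst_lie, F.cst_map, F.cst_map, c1, c2, ← lie_skew]
        all_goals omega
      rw [hback]
      abel
end
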